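/- arXiv:1008.0133 — 4 statements merged into one kernel-verified Lean document; each statement's English description precedes it below -/
import Mathlib

section
/- Let ε > 0, let F : ℝ × ℝ → ℝ be continuously differentiable, and let u : ℝ × ℝ → ℝ be twice continuously differentiable with ∂u/∂y (y, s) = (1/ε)·F(u(y, s), y) and u(−π, s) = s. If for some s₀ and some constant c > 0 one has ∫_{−π}^{π} (∂F/∂x)(u(y, s₀), y) dy ≤ −c, then 0 < ∂u/∂s (π, s₀) ≤ exp(−c/ε); that is, the derivative of the Poincaré map at s₀ is exponentially small in ε. -/
open Real intervalIntegral

/-- Contraction corollary of the variational-equation formula: if the trajectory through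
`s₀` accumulates a net negative integral `∫_{-π}^{π} ∂F/∂x (u (y, s₀), y) dy ≤ -c` with
`c > 0`, then the derivative of the Poincaré map `s ↦ u (π, s)` at `s₀` is positive and
exponentially small: `0 < ∂u/∂s (π, s₀) ≤ exp (-c / ε)`. -/
theorem stmt_1 (ε : ℝ) (hε : 0 < ε)
    (F : ℝ × ℝ → ℝ) (hF : ContDiff ℝ 1 F)
    (u : ℝ × ℝ → ℝ) (hu : ContDiff ℝ 2 u)
    (hode : ∀ y s : ℝ, HasDerivAt (fun y' => u (y', s)) ((1 / ε) * F (u (y, s), y)) y)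
    (hinit : ∀ s : ℝ, u (-π, s) = s)
    (s₀ c : ℝ) (hc : 0 < c)
    (hint : (∫ y in (-π)..π, deriv (fun x => F (x, y)) (u (y, s₀))) ≤ -c) :
    0 < deriv (fun s => u (π, s)) s₀ ∧
      deriv (fun s => u (π, s)) s₀ ≤ Real.exp (-c / ε) := by
  have hεne : ε ≠ 0 := ne_of_gt hε
  have hud : Differentiable ℝ u := hu.differentiable (by norm_num)
  have hDu : ∀ p, HasFDerivAt u (fderiv ℝ u p) p := fun p => (hud p).hasFDerivAt
  have hDuc : ContDiff ℝ 1 (fderiv ℝ u) := hu.fderiv_right (by norm_num)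
  have hDud : Differentiable ℝ (fderiv ℝ u) := hDuc.differentiable one_ne_zero
  have hFd : Differentiable ℝ F := hF.differentiable one_ne_zero
  -- partial derivative of `u` in `s`
  set g : ℝ → ℝ := fun y => fderiv ℝ u (y, s₀) (0, 1) with hg_def
  have hpart : ∀ y s : ℝ, HasDerivAt (fun s' => u (y, s')) (fderiv ℝ u (y, s) (0, 1)) s := by
    intro y s
    have h1 : HasDerivAt (fun s' : ℝ => ((y, s') : ℝ × ℝ)) ((0 : ℝ), (1 : ℝ)) s :=
      (hasDerivAt_const s y).prodMk (hasDerivAt_id s)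
    exact (hDu (y, s)).comp_hasDerivAt s h1
  -- the ODE expressed via `fderiv`
  have hpart1 : ∀ y s : ℝ, fderiv ℝ u (y, s) (1, 0) = (1 / ε) * F (u (y, s), y) := by
    intro y s
    have h1 : HasDerivAt (fun y' : ℝ => ((y', s) : ℝ × ℝ)) ((1 : ℝ), (0 : ℝ)) y :=
      (hasDerivAt_id y).prodMk (hasDerivAt_const y s)
    have h2 : HasDerivAt (fun y' => u (y', s)) (fderiv ℝ u (y, s) (1, 0)) y :=
      (hDu (y, s)).comp_hasDerivAt y h1
    exact h2.unique (hode y s)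
  -- the coefficient of the variational equation
  set a : ℝ → ℝ := fun y => deriv (fun x => F (x, y)) (u (y, s₀)) with ha_def
  have ha_eq : ∀ x y : ℝ, deriv (fun x' => F (x', y)) x = fderiv ℝ F (x, y) (1, 0) := by
    intro x y
    have h1 : HasDerivAt (fun x' : ℝ => ((x', y) : ℝ × ℝ)) ((1 : ℝ), (0 : ℝ)) x :=
      (hasDerivAt_id x).prodMk (hasDerivAt_const x y)
    exact ((hFd (x, y)).hasFDerivAt.comp_hasDerivAt x h1).deriv
  have hFpart : ∀ (x y h : ℝ), fderiv ℝ F (x, y) (h, 0) = h * deriv (fun x' => F (x', y)) x := by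
    intro x y h
    have : ((h, (0 : ℝ)) : ℝ × ℝ) = h • ((1 : ℝ), (0 : ℝ)) := by simp
    rw [this, (fderiv ℝ F (x, y)).map_smul, smul_eq_mul, ha_eq]
  have ha_cont : Continuous a := by
    have h1 : Continuous fun y : ℝ => fderiv ℝ F (u (y, s₀), y) := by
      exact (hF.continuous_fderiv one_ne_zero).comp
        ((hud.continuous.comp (continuous_id.prodMk continuous_const)).prodMk continuous_id)
    have h2 : Continuous fun y : ℝ => fderiv ℝ F (u (y, s₀), y) ((1 : ℝ), (0 : ℝ)) :=
      (ContinuousLinearMap.apply ℝ ℝ ((1 : ℝ), (0 : ℝ))).continuous.comp h1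
    have : a = fun y : ℝ => fderiv ℝ F (u (y, s₀), y) ((1 : ℝ), (0 : ℝ)) := by
      funext y; exact ha_eq (u (y, s₀)) y
    rw [this]; exact h2
  -- the variational equation for `g`
  have hgode : ∀ y : ℝ, HasDerivAt g ((1 / ε) * (a y * g y)) y := by
    intro y
    have hf'' : HasFDerivAt (fderiv ℝ u) (fderiv ℝ (fderiv ℝ u) (y, s₀)) (y, s₀) :=
      (hDud (y, s₀)).hasFDerivAt
    have hsymm := second_derivative_symmetric hDu hf'' ((0 : ℝ), (1 : ℝ)) ((1 : ℝ), (0 : ℝ))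
    have h1 : HasDerivAt (fun y' : ℝ => ((y', s₀) : ℝ × ℝ)) ((1 : ℝ), (0 : ℝ)) y :=
      (hasDerivAt_id y).prodMk (hasDerivAt_const y s₀)
    have h2 : HasFDerivAt (fun p : ℝ × ℝ => fderiv ℝ u p ((0 : ℝ), (1 : ℝ)))
        ((ContinuousLinearMap.apply ℝ ℝ ((0 : ℝ), (1 : ℝ))).comp
          (fderiv ℝ (fderiv ℝ u) (y, s₀))) (y, s₀) :=
      (ContinuousLinearMap.apply ℝ ℝ ((0 : ℝ), (1 : ℝ))).hasFDerivAt.comp _ hf''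
    have h3 : HasDerivAt g (fderiv ℝ (fderiv ℝ u) (y, s₀) ((1 : ℝ), (0 : ℝ)) ((0 : ℝ), (1 : ℝ))) y :=
      by have := h2.comp_hasDerivAt y h1; exact this
    -- derivative in `s` of `s ↦ fderiv u (y,s) (1,0)`
    have hs : HasDerivAt (fun s : ℝ => ((y, s) : ℝ × ℝ)) ((0 : ℝ), (1 : ℝ)) s₀ :=
      (hasDerivAt_const s₀ y).prodMk (hasDerivAt_id s₀)
    have h4 : HasDerivAt (fun s => fderiv ℝ u (y, s) ((1 : ℝ), (0 : ℝ)))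
        (fderiv ℝ (fderiv ℝ u) (y, s₀) ((0 : ℝ), (1 : ℝ)) ((1 : ℝ), (0 : ℝ))) s₀ :=
      (((ContinuousLinearMap.apply ℝ ℝ ((1 : ℝ), (0 : ℝ))).hasFDerivAt.comp _
        hf'').comp_hasDerivAt s₀ hs)
    -- derivative in `s` of `s ↦ (1/ε) F (u (y,s), y)`
    have h5 : HasDerivAt (fun s => (1 / ε) * F (u (y, s), y)) ((1 / ε) * (a y * g y)) s₀ := by
      have hus : HasDerivAt (fun s => u (y, s)) (g y) s₀ := hpart y s₀
      have hcp : HasDerivAt (fun s : ℝ => ((u (y, s), y) : ℝ × ℝ)) ((g y : ℝ), (0 : ℝ)) s₀ :=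
        hus.prodMk (hasDerivAt_const s₀ y)
      have hFc : HasDerivAt (fun s => F (u (y, s), y))
          (fderiv ℝ F (u (y, s₀), y) (g y, 0)) s₀ :=
        (hFd (u (y, s₀), y)).hasFDerivAt.comp_hasDerivAt s₀ hcp
      have heq : fderiv ℝ F (u (y, s₀), y) (g y, 0) = a y * g y := by
        rw [hFpart]; ring
      rw [heq] at hFc
      exact hFc.const_mul (1 / ε)
    have h4' : HasDerivAt (fun s => (1 / ε) * F (u (y, s), y))
        (fderiv ℝ (fderiv ℝ u) (y, s₀) ((0 : ℝ), (1 : ℝ)) ((1 : ℝ), (0 : ℝ))) s₀ := by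
      have : (fun s => fderiv ℝ u (y, s) ((1 : ℝ), (0 : ℝ)))
          = fun s => (1 / ε) * F (u (y, s), y) := funext fun s => hpart1 y s
      rwa [this] at h4
    have hval : fderiv ℝ (fderiv ℝ u) (y, s₀) ((1 : ℝ), (0 : ℝ)) ((0 : ℝ), (1 : ℝ))
        = (1 / ε) * (a y * g y) := by
      rw [← hsymm]; exact h4'.unique h5
    rwa [hval] at h3
  -- Poincaré map derivative is `g π`
  have hP : deriv (fun s => u (π, s)) s₀ = g π := (hpart π s₀).deriv
  -- initial value `g (-π) = 1`
  have hg0 : g (-π) = 1 := by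
    have h := hpart (-π) s₀
    simp only [hinit] at h
    exact h.unique (hasDerivAt_id s₀)
  -- the accumulated integral
  set A : ℝ → ℝ := fun y => ∫ t in (-π)..y, a t with hA_def
  have hA : ∀ y : ℝ, HasDerivAt A (a y) y := fun y =>
    intervalIntegral.integral_hasDerivAt_right (ha_cont.intervalIntegrable _ _)
      (ha_cont.stronglyMeasurableAtFilter _ _) ha_cont.continuousAt
  -- the conserved quantity
  set φ : ℝ → ℝ := fun y => Real.exp (-(A y) / ε) * g y with hφ_def
  have hφ' : ∀ y : ℝ, HasDerivAt φ 0 y := by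
    intro y
    have hAe : HasDerivAt (fun y' => -(A y') / ε) (-(a y) / ε) y := ((hA y).neg).div_const ε
    have hexp : HasDerivAt (fun y' => Real.exp (-(A y') / ε))
        (Real.exp (-(A y) / ε) * (-(a y) / ε)) y := hAe.exp
    have := hexp.mul (hgode y)
    refine this.congr_deriv ?_
    ring
  have hconst : φ π = φ (-π) :=
    is_const_of_deriv_eq_zero (fun y => (hφ' y).differentiableAt)
      (fun y => (hφ' y).deriv) π (-π)
  have hφinit : φ (-π) = 1 := by
    simp [hφ_def, hA_def, intervalIntegral.integral_same, hg0]
  have hgπ : g π = Real.exp (A π / ε) := by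
    have h : Real.exp (-(A π) / ε) * g π = 1 := hconst.trans hφinit
    rw [neg_div, Real.exp_neg] at h
    rw [inv_mul_eq_iff_eq_mul₀ (ne_of_gt (Real.exp_pos _))] at h
    rw [h, mul_one]
  have hAπ : A π ≤ -c := hint
  rw [hP, hgπ]
  constructor
  · exact Real.exp_pos _
  · exact Real.exp_le_exp.mpr ((div_le_div_iff_of_pos_right hε).mpr hAπ)
end

section
/- Let ε > 0, let F : ℝ × ℝ → ℝ be continuously differentiable, and let u : ℝ × ℝ → ℝ be twice continuously differentiable with ∂u/∂y (y, s) = (1/ε)·F(u(y, s), y) and u(−π, s) = s. If for some s₀ and some constant c > 0 one has ∫_{−π}^{π} (∂F/∂x)(u(y, s₀), y) dy ≥ c, then ∂u/∂s (π, s₀) ≥ exp(c/ε); that is, the derivative of the Poincaré map at s₀ is exponentially large in ε. -/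
open Real intervalIntegral

/-- Expansion corollary of the variational-equation formula: if the trajectory through
`s₀` accumulates a net positive integral `∫_{-π}^{π} ∂F/∂x (u (y, s₀), y) dy ≥ c` with
`c > 0`, then the derivative of the Poincaré map `s ↦ u (π, s)` at `s₀` is exponentially
large: `∂u/∂s (π, s₀) ≥ exp (c / ε)`. -/
theorem stmt_2 (ε : ℝ) (hε : 0 < ε)
    (F : ℝ × ℝ → ℝ) (hF : ContDiff ℝ 1 F)
    (u : ℝ × ℝ → ℝ) (hu : ContDiff ℝ 2 u)
    (hode : ∀ y s : ℝ, HasDerivAt (fun y' => u (y', s)) ((1 / ε) * F (u (y, s), y)) y)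
    (hinit : ∀ s : ℝ, u (-π, s) = s)
    (s₀ c : ℝ) (hc : 0 < c)
    (hint : c ≤ ∫ y in (-π)..π, deriv (fun x => F (x, y)) (u (y, s₀))) :
    Real.exp (c / ε) ≤ deriv (fun s => u (π, s)) s₀ := by
  have hεne : ε ≠ 0 := ne_of_gt hε
  set f' : ℝ × ℝ → (ℝ × ℝ →L[ℝ] ℝ) := fderiv ℝ u with hf'def
  have hud : Differentiable ℝ u := hu.differentiable (by norm_num)
  have hFd : Differentiable ℝ F := hF.differentiable (by norm_num)
  have hf'cd : ContDiff ℝ 1 f' := hu.fderiv_right (by norm_num)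
  have hf'd : Differentiable ℝ f' := hf'cd.differentiable (by norm_num)
  have hfderiv : ∀ p : ℝ × ℝ, HasFDerivAt u (f' p) p := fun p => (hud p).hasFDerivAt
  -- derivative in the y direction
  have hline : ∀ y s : ℝ, HasDerivAt (fun y' : ℝ => (y', s)) ((1 : ℝ), (0 : ℝ)) y := by
    intro y s
    simpa using (hasDerivAt_id y).prodMk (hasDerivAt_const y s)
  have hline' : ∀ y s : ℝ, HasDerivAt (fun s' : ℝ => (y, s')) ((0 : ℝ), (1 : ℝ)) s := by
    intro y s
    simpa using (hasDerivAt_const s y).prodMk (hasDerivAt_id s)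
  have hdy : ∀ y s : ℝ, HasDerivAt (fun y' => u (y', s)) (f' (y, s) (1, 0)) y := by
    intro y s
    exact (hfderiv (y, s)).comp_hasDerivAt y (hline y s)
  have hds : ∀ y s : ℝ, HasDerivAt (fun s' => u (y, s')) (f' (y, s) (0, 1)) s := by
    intro y s
    exact (hfderiv (y, s)).comp_hasDerivAt s (hline' y s)
  have hfy : ∀ y s : ℝ, f' (y, s) (1, 0) = (1 / ε) * F (u (y, s), y) := by
    intro y s
    exact (hdy y s).unique (hode y s)
  -- variational solution
  set v : ℝ → ℝ := fun y => f' (y, s₀) (0, 1) with hvdef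
  set a : ℝ → ℝ := fun y => fderiv ℝ F (u (y, s₀), y) (1, 0) with hadef
  -- a equals the integrand
  have ha_eq : ∀ y : ℝ, a y = deriv (fun x => F (x, y)) (u (y, s₀)) := by
    intro y
    have h1 : HasDerivAt (fun x => F (x, y)) (fderiv ℝ F (u (y, s₀), y) (1, 0)) (u (y, s₀)) := by
      have hinner : HasDerivAt (fun x : ℝ => (x, y)) ((1 : ℝ), (0 : ℝ)) (u (y, s₀)) := by
        simpa using (hasDerivAt_id (u (y, s₀))).prodMk (hasDerivAt_const (u (y, s₀)) y)
      exact (hFd (u (y, s₀), y)).hasFDerivAt.comp_hasDerivAt (u (y, s₀)) hinner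
    exact (h1.deriv).symm
  -- the variational ODE : v' = (1/ε) a v
  have hv' : ∀ y : ℝ, HasDerivAt v ((1 / ε) * (a y * v y)) y := by
    intro y
    have hf'' : HasFDerivAt f' (fderiv ℝ f' (y, s₀)) (y, s₀) := (hf'd (y, s₀)).hasFDerivAt
    set f'' := fderiv ℝ f' (y, s₀) with hf''def
    -- y-derivative of v is f'' (1,0) (0,1)
    have h1 : HasDerivAt (fun y' => f' (y', s₀)) (f'' (1, 0)) y := by
      exact hf''.comp_hasDerivAt y (hline y s₀)
    have h2 : HasDerivAt v (f'' (1, 0) (0, 1)) y := by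
      have := ((ContinuousLinearMap.apply ℝ ℝ ((0 : ℝ), (1 : ℝ))).hasFDerivAt).comp_hasDerivAt
        y h1
      exact this
    -- symmetry
    have hsymm : f'' (1, 0) (0, 1) = f'' (0, 1) (1, 0) :=
      second_derivative_symmetric hfderiv hf'' _ _
    -- compute f'' (0,1) (1,0) as the s-derivative of s ↦ f' (y,s) (1,0)
    have h3 : HasDerivAt (fun s => f' (y, s)) (f'' (0, 1)) s₀ := by
      exact hf''.comp_hasDerivAt s₀ (hline' y s₀)
    have h4 : HasDerivAt (fun s => f' (y, s) (1, 0)) (f'' (0, 1) (1, 0)) s₀ := by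
      have := ((ContinuousLinearMap.apply ℝ ℝ ((1 : ℝ), (0 : ℝ))).hasFDerivAt).comp_hasDerivAt
        s₀ h3
      exact this
    -- but that function equals s ↦ (1/ε) F (u (y,s), y)
    have h5 : HasDerivAt (fun s => (1 / ε) * F (u (y, s), y)) ((1 / ε) * (a y * v y)) s₀ := by
      have hinner : HasDerivAt (fun s : ℝ => (u (y, s), y)) ((v y, (0 : ℝ))) s₀ :=
        (hds y s₀).prodMk (hasDerivAt_const s₀ y)
      have hF' : HasDerivAt (fun s => F (u (y, s), y))
          (fderiv ℝ F (u (y, s₀), y) (v y, 0)) s₀ := by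
        exact (hFd (u (y, s₀), y)).hasFDerivAt.comp_hasDerivAt s₀ hinner
      have hval : fderiv ℝ F (u (y, s₀), y) (v y, 0) = a y * v y := by
        have : ((v y : ℝ), (0 : ℝ)) = v y • ((1 : ℝ), (0 : ℝ)) := by
          simp [Prod.ext_iff]
        rw [this, (fderiv ℝ F (u (y, s₀), y)).map_smul]
        simp [a, mul_comm]
      simpa [hval] using hF'.const_mul (1 / ε)
    have h6 : (fun s => f' (y, s) (1, 0)) = fun s => (1 / ε) * F (u (y, s), y) := by
      funext s; exact hfy y s
    have h7 : HasDerivAt (fun s => f' (y, s) (1, 0)) ((1 / ε) * (a y * v y)) s₀ := by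
      rw [h6]; exact h5
    have h8 : f'' (0, 1) (1, 0) = (1 / ε) * (a y * v y) := h4.unique h7
    rw [← h8, ← hsymm]
    exact h2
  -- continuity of a
  have hacont : Continuous a := by
    have h1 : Continuous (fderiv ℝ F) := hF.continuous_fderiv (by norm_num)
    have h2 : Continuous fun y : ℝ => (u (y, s₀), y) :=
      (hud.continuous.comp (by continuity)).prodMk continuous_id
    exact (h1.comp h2).clm_apply continuous_const
  -- FTC primitive
  set A : ℝ → ℝ := fun y => ∫ t in (-π)..y, a t with hAdef
  have hA' : ∀ y : ℝ, HasDerivAt A (a y) y := fun y =>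
    (hacont.integral_hasStrictDerivAt (-π) y).hasDerivAt
  -- the product v y * exp (-(A y)/ε) is constant
  set φ : ℝ → ℝ := fun y => v y * Real.exp (-(A y) / ε) with hφdef
  have hφ' : ∀ y : ℝ, HasDerivAt φ 0 y := by
    intro y
    have hE : HasDerivAt (fun y => Real.exp (-(A y) / ε)) (Real.exp (-(A y) / ε) * (-(a y) / ε)) y := by
      have h1 : HasDerivAt (fun y => -(A y) / ε) (-(a y) / ε) y := ((hA' y).neg).div_const ε
      exact (Real.hasDerivAt_exp _).comp y h1
    have := (hv' y).mul hE
    exact this.congr_deriv (by ring)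
  have hφconst : φ π = φ (-π) := by
    have hd : Differentiable ℝ φ := fun y => (hφ' y).differentiableAt
    have h0 : ∀ y : ℝ, deriv φ y = 0 := fun y => (hφ' y).deriv
    have := is_const_of_deriv_eq_zero hd h0 π (-π)
    exact this
  -- initial condition: v(-π) = 1
  have hvinit : v (-π) = 1 := by
    have h1 : HasDerivAt (fun s => u (-π, s)) (v (-π)) s₀ := hds (-π) s₀
    have h2 : (fun s : ℝ => u (-π, s)) = fun s => s := funext hinit
    have h3 : HasDerivAt (fun s => u (-π, s)) 1 s₀ := by
      rw [h2]; exact hasDerivAt_id s₀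
    exact h1.unique h3
  have hA0 : A (-π) = 0 := by simp [A]
  have hvπ : v π = Real.exp (A π / ε) := by
    have h1 : v π * Real.exp (-(A π) / ε) = 1 := by
      have := hφconst
      simp only [φ, hvinit, hA0] at this
      simpa using this
    have h2 : Real.exp (-(A π) / ε) = (Real.exp (A π / ε))⁻¹ := by
      rw [← Real.exp_neg]; ring_nf
    rw [h2] at h1
    field_simp at h1
    linarith [h1]
  -- conclude
  have hgoal : deriv (fun s => u (π, s)) s₀ = v π := (hds π s₀).deriv
  rw [hgoal, hvπ]
  have hAπ : c ≤ A π := by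
    have hfun : a = fun y => deriv (fun x => F (x, y)) (u (y, s₀)) := funext ha_eq
    rw [hAdef, hfun]
    exact hint
  exact Real.exp_le_exp.mpr (by gcongr)
end

section
/- Let P : ℝ → ℝ be differentiable with P(x + 2π) = P(x) + 2π for all x, and suppose the set F = {x ∈ [0, 2π) : P(x) = x} is finite and nonempty, with cardinality m. Then there exist at least m distinct points t₁, …, t_m ∈ [0, 2π) with P′(t_i) = 1 for each i. -/
open Real

/-- Circle version of Rolle's theorem: if `P` is a differentiable lift of a circle map
(`P (x + 2π) = P x + 2π`) whose set of fixed points in `[0, 2π)` is finite and nonempty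
of cardinality `m`, then there are at least `m` distinct neutral points in `[0, 2π)`,
i.e. points where `P' = 1`. -/
theorem stmt_10 (P : ℝ → ℝ) (hdiff : Differentiable ℝ P)
    (hlift : ∀ x : ℝ, P (x + 2 * π) = P x + 2 * π)
    (m : ℕ) (hm : 0 < m)
    (hfin : ({x ∈ Set.Ico 0 (2 * π) | P x = x}).Finite)
    (hcard : ({x ∈ Set.Ico 0 (2 * π) | P x = x}).ncard = m) :
    ∃ t : Fin m → ℝ, Function.Injective t ∧
      ∀ i : Fin m, t i ∈ Set.Ico 0 (2 * π) ∧ deriv P (t i) = 1 := by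
  -- deriv periodicity
  have hper : ∀ y : ℝ, deriv P (y + 2 * π) = deriv P y := by
    intro y
    have h1 : deriv (fun x => P (x + 2 * π)) y = deriv P (y + 2 * π) :=
      deriv_comp_add_const P (2 * π) y
    have h2 : (fun x => P (x + 2 * π)) = fun x => P x + 2 * π := by
      funext x; exact hlift x
    rw [h2] at h1
    rw [← h1, deriv_add_const]
  -- Rolle step
  have rolle : ∀ a b : ℝ, a < b → P a = a → P b = b →
      ∃ c, a < c ∧ c < b ∧ deriv P c = 1 := by
    intro a b hab ha hb
    have hg : ∀ x : ℝ, deriv (fun y => P y - y) x = deriv P x - 1 := by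
      intro x
      exact (((hdiff x).hasDerivAt).sub (hasDerivAt_id x)).deriv
    obtain ⟨c, hc, hc0⟩ := exists_deriv_eq_zero (f := fun y => P y - y) hab
      ((hdiff.continuous.sub continuous_id).continuousOn)
      (by simp [ha, hb])
    refine ⟨c, hc.1, hc.2, ?_⟩
    have := hg c
    rw [hc0] at this
    linarith
  set S := {x ∈ Set.Ico 0 (2 * π) | P x = x} with hS
  set s : Finset ℝ := hfin.toFinset with hs
  have hcards : s.card = m := by
    rw [hs, ← Set.ncard_eq_toFinset_card S hfin]; exact hcard
  set x : Fin m → ℝ := fun i => s.orderEmbOfFin hcards i with hx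
  have hxmono : StrictMono x := (s.orderEmbOfFin hcards).strictMono
  have hxS : ∀ i, x i ∈ S := by
    intro i
    have := Finset.orderEmbOfFin_mem s hcards i
    exact (hfin.mem_toFinset).mp this
  have hx0 : ∀ i, 0 ≤ x i := fun i => (hxS i).1.1
  have hx2 : ∀ i, x i < 2 * π := fun i => (hxS i).1.2
  have hxP : ∀ i, P (x i) = x i := fun i => (hxS i).2
  -- last index
  have hlast : ∀ i : Fin m, (i : ℕ) + 1 < m ∨ (i : ℕ) + 1 = m := by
    intro i; omega
  -- for each i choose c
  have key : ∀ i : Fin m, ∃ c, (0 ≤ c ∧ c < 2 * π) ∧ deriv P c = 1 ∧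
      ((∃ h : (i : ℕ) + 1 < m, x i < c ∧ c < x ⟨(i:ℕ)+1, h⟩) ∨
       ((i : ℕ) + 1 = m ∧ (x i < c ∨ c < x ⟨0, hm⟩))) := by
    intro i
    rcases hlast i with h | h
    · obtain ⟨c, h1, h2, h3⟩ := rolle (x i) (x ⟨(i:ℕ)+1, h⟩)
        (hxmono (by simp [Fin.lt_def])) (hxP i) (hxP _)
      exact ⟨c, ⟨le_trans (hx0 i) h1.le, lt_trans h2 (hx2 _)⟩, h3,
        Or.inl ⟨h, h1, h2⟩⟩
    · -- wrap-around
      have hPb : P (x ⟨0, hm⟩ + 2 * π) = x ⟨0, hm⟩ + 2 * π := by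
        rw [hlift, hxP]
      have hab : x i < x ⟨0, hm⟩ + 2 * π := by
        have := hx2 i
        have := hx0 ⟨0, hm⟩
        linarith
      obtain ⟨c, h1, h2, h3⟩ := rolle (x i) (x ⟨0, hm⟩ + 2 * π) hab (hxP i) hPb
      by_cases hc : c < 2 * π
      · exact ⟨c, ⟨le_trans (hx0 i) h1.le, hc⟩, h3, Or.inr ⟨h, Or.inl h1⟩⟩
      · have h20 : x ⟨0, hm⟩ < 2 * π := hx2 ⟨0, hm⟩
        refine ⟨c - 2 * π, ⟨by linarith, by linarith⟩, ?_, Or.inr ⟨h, Or.inr (by linarith)⟩⟩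
        have := hper (c - 2 * π)
        simp only [sub_add_cancel] at this
        rw [← this]; exact h3
  choose t ht1 ht2 ht3 using key
  refine ⟨t, ?_, fun i => ⟨⟨(ht1 i).1, (ht1 i).2⟩, ht2 i⟩⟩
  -- injectivity
  have main : ∀ i j : Fin m, i < j → t i ≠ t j := by
    intro i j hij
    have hij' : (i : ℕ) < (j : ℕ) := hij
    -- i is not last
    rcases ht3 i with ⟨hi, hil, hiu⟩ | ⟨hi, _⟩
    · rcases ht3 j with ⟨hj, hjl, hju⟩ | ⟨hj, hjc⟩
      · -- t i < x (i+1) ≤ x j < t j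
        have : x ⟨(i:ℕ)+1, hi⟩ ≤ x j := hxmono.monotone (by simp [Fin.le_def]; omega)
        have := lt_of_lt_of_le hiu this
        exact ne_of_lt (lt_trans this hjl)
      · rcases hjc with hjc | hjc
        · -- t i < x(i+1) ≤ x j < t j
          have : x ⟨(i:ℕ)+1, hi⟩ ≤ x j := hxmono.monotone (by simp [Fin.le_def]; omega)
          exact ne_of_lt (lt_trans (lt_of_lt_of_le hiu this) hjc)
        · -- t j < x 0 ≤ x i < t i
          have : x ⟨0, hm⟩ ≤ x i := hxmono.monotone (by simp [Fin.le_def])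
          exact (ne_of_lt (lt_trans hjc (lt_of_le_of_lt this hil))).symm
    · -- i last: contradiction since i < j < m
      exfalso; have := j.2; omega
  intro i j h
  rcases lt_trichotomy i j with hij | hij | hij
  · exact absurd h (main i j hij)
  · exact hij
  · exact absurd h.symm (main j i hij)
end

section
/- Let P : ℝ → ℝ be continuous, strictly increasing, differentiable, and satisfy P(x + 2π) = P(x) + 2π for all x. Suppose the set F = {x ∈ [0, 2π) : P(x) = x} is finite and nonempty and that P′(x) ≠ 1 for every x ∈ F. Then the number of x ∈ F with P′(x) < 1 equals the number of x ∈ F with P′(x) > 1. -/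
open Real Set Filter Topology

/-- local sign near a zero with positive derivative -/
lemma sign_near {g : ℝ → ℝ} {x c : ℝ} (hd : HasDerivAt g c x) (hgx : g x = 0) (hc : 0 < c) :
    (∀ᶠ y in 𝓝[>] x, 0 < g y) ∧ (∀ᶠ y in 𝓝[<] x, g y < 0) := by
  have hs : Tendsto (slope g x) (𝓝[≠] x) (𝓝 c) := hasDerivAt_iff_tendsto_slope.mp hd
  have hpos : ∀ᶠ y in 𝓝[≠] x, 0 < slope g x y := hs.eventually (eventually_gt_nhds hc)
  have hval : ∀ y, g y = slope g x y * (y - x) + g x := by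
    intro y
    rcases eq_or_ne y x with rfl | hy
    · simp
    · rw [slope_def_field, div_mul_cancel₀]
      · ring
      · exact sub_ne_zero.mpr hy
  constructor
  · have h1 : ∀ᶠ y in 𝓝[>] x, 0 < slope g x y :=
      nhdsWithin_mono x (fun y (hy : x < y) => ne_of_gt hy) hpos
    filter_upwards [h1, self_mem_nhdsWithin] with y h2 (h3 : x < y)
    rw [hval y, hgx, add_zero]
    exact mul_pos h2 (by linarith)
  · have h1 : ∀ᶠ y in 𝓝[<] x, 0 < slope g x y :=
      nhdsWithin_mono x (fun y (hy : y < x) => ne_of_lt hy) hpos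
    filter_upwards [h1, self_mem_nhdsWithin] with y h2 (h3 : y < x)
    rw [hval y, hgx, add_zero]
    exact mul_neg_of_pos_of_neg h2 (by linarith)

/-- version for negative derivative -/
lemma sign_near' {g : ℝ → ℝ} {x c : ℝ} (hd : HasDerivAt g c x) (hgx : g x = 0) (hc : c < 0) :
    (∀ᶠ y in 𝓝[>] x, g y < 0) ∧ (∀ᶠ y in 𝓝[<] x, 0 < g y) := by
  have := sign_near (g := fun y => -g y) (hd.neg) (by simp [hgx]) (by linarith)
  constructor
  · filter_upwards [this.1] with y hy; simpa using hy
  · filter_upwards [this.2] with y hy; simpa using hy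

/-- alternation of consecutive zeros -/
lemma pair_alt {g : ℝ → ℝ} (hgc : Continuous g) {a b ca cb : ℝ} (hab : a < b)
    (hga : g a = 0) (hgb : g b = 0) (hda : HasDerivAt g ca a) (hdb : HasDerivAt g cb b)
    (hca : ca ≠ 0) (hcb : cb ≠ 0) (hno : ∀ y ∈ Ioo a b, g y ≠ 0) :
    0 < cb ↔ ¬ 0 < ca := by
  -- sign constancy on Ioo a b
  have hconst : ∀ u ∈ Ioo a b, ∀ v ∈ Ioo a b, 0 < g u → 0 < g v := by
    intro u hu v hv hgu
    rcases lt_trichotomy (g v) 0 with h | h | h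
    · exfalso
      have hsub : uIcc u v ⊆ Ioo a b := Set.ordConnected_Ioo.uIcc_subset hu hv
      have : (0 : ℝ) ∈ uIcc (g u) (g v) := by
        rw [Set.mem_uIcc]; right; constructor <;> linarith
      obtain ⟨w, hw, hgw⟩ := intermediate_value_uIcc (hgc.continuousOn (s := uIcc u v)) this
      exact hno w (hsub hw) hgw
    · exact absurd h (hno v hv)
    · exact h
  -- find points of each sign near a and b
  have hIa : Ioo a b ∈ 𝓝[>] a := Ioo_mem_nhdsGT hab
  have hIb : Ioo a b ∈ 𝓝[<] b := Ioo_mem_nhdsLT hab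
  have hboth : ¬ (0 < ca ∧ 0 < cb) := by
    rintro ⟨h1, h2⟩
    obtain ⟨u, hu, hgu⟩ := ((sign_near hda hga h1).1.and (eventually_of_mem hIa (fun y hy => hy))).exists
    obtain ⟨v, hv, hgv⟩ := ((sign_near hdb hgb h2).2.and (eventually_of_mem hIb (fun y hy => hy))).exists
    exact absurd (hconst u hgu v hgv hu) (by linarith)
  have hneither : ¬ (ca < 0 ∧ cb < 0) := by
    rintro ⟨h1, h2⟩
    obtain ⟨u, hu, hgu⟩ := ((sign_near' hda hga h1).1.and (eventually_of_mem hIa (fun y hy => hy))).exists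
    obtain ⟨v, hv, hgv⟩ := ((sign_near' hdb hgb h2).2.and (eventually_of_mem hIb (fun y hy => hy))).exists
    exact absurd (hconst v hgv u hgu hv) (by linarith)
  rcases hca.lt_or_gt with h | h <;> rcases hcb.lt_or_gt with h' | h' <;>
    simp_all <;> first | linarith | (exfalso; exact hneither ⟨h, h'⟩)

/-- alternating-count lemma -/
lemma alt_count {α : Type*} (f : α → Bool) :
    ∀ l : List α, l.Chain' (fun a b => f b = !f a) → ∀ h : l ≠ [],
    2 * ((l.countP f : ℤ) - l.countP (fun a => !f a)) =
      (if f (l.head h) then 1 else -1) + (if f (l.getLast h) then 1 else -1) := by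
  intro l
  induction l with
  | nil => intro _ h; exact absurd rfl h
  | cons a t ih =>
    intro hch h
    match t, hch with
    | [], _ => simp [List.countP_cons]; by_cases hfa : f a <;> simp [hfa] <;> ring
    | b :: t', hch =>
      have h1 : f b = !f a := (List.isChain_cons_cons.mp hch).1
      have h2 := ih (List.isChain_cons_cons.mp hch).2 (by simp)
      have hlast : (a :: b :: t').getLast h = (b :: t').getLast (by simp) :=
        List.getLast_cons (by simp)
      rw [hlast]
      simp only [List.countP_cons, List.head_cons] at *
      push_cast
      by_cases hfa : f a <;> simp [hfa] at h1 <;> simp [hfa, h1] at h2 ⊢ <;> linarith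

lemma alt_count_eq {α : Type*} (f : α → Bool) (l : List α)
    (hch : l.Chain' (fun a b => f b = !f a)) (h : l ≠ [])
    (hwrap : f (l.head h) = !f (l.getLast h)) :
    l.countP f = l.countP (fun a => !f a) := by
  have := alt_count f l hch h
  rw [hwrap] at this
  by_cases hl : f (l.getLast h) <;> simp [hl] at this <;> omega

/-- Alternation of attracting and repelling fixed points: for a strictly increasing
differentiable lift `P` of a circle diffeomorphism whose fixed points in `[0, 2π)` form a
finite nonempty set on which `P' ≠ 1`, the number of fixed points with `P' < 1`
(attracting cycles) equals the number of fixed points with `P' > 1` (repelling cycles). -/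
theorem stmt_11 (P : ℝ → ℝ) (hcont : Continuous P) (hmono : StrictMono P)
    (hdiff : Differentiable ℝ P)
    (hlift : ∀ x : ℝ, P (x + 2 * π) = P x + 2 * π)
    (hfin : ({x ∈ Set.Ico 0 (2 * π) | P x = x}).Finite)
    (hne : ({x ∈ Set.Ico 0 (2 * π) | P x = x}).Nonempty)
    (hhyp : ∀ x ∈ {x ∈ Set.Ico 0 (2 * π) | P x = x}, deriv P x ≠ 1) :
    ({x ∈ Set.Ico 0 (2 * π) | P x = x ∧ deriv P x < 1}).ncard =
      ({x ∈ Set.Ico 0 (2 * π) | P x = x ∧ 1 < deriv P x}).ncard := by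
  classical
  set g : ℝ → ℝ := fun x => P x - x with hg
  have hgc : Continuous g := hcont.sub continuous_id
  have hgd : ∀ x, HasDerivAt g (deriv P x - 1) x := fun x =>
    ((hdiff x).hasDerivAt).sub (hasDerivAt_id x)
  have hgzero : ∀ x, g x = 0 ↔ P x = x := fun x => sub_eq_zero
  have hgper : ∀ x, g (x + 2 * π) = g x := by
    intro x; simp only [hg, hlift x]; ring
  -- derivative is periodic
  have hdper : ∀ x, deriv P (x + 2 * π) = deriv P x := by
    intro x
    have h1 : HasDerivAt (fun y => P (y + 2 * π)) (deriv P (x + 2 * π)) x := by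
      simpa [Function.comp_def] using (HasDerivAt.comp x ((hdiff (x + 2 * π)).hasDerivAt)
        ((hasDerivAt_id x).add_const (2 * π)))
    have h2 : HasDerivAt (fun y => P y + 2 * π) (deriv P x) x :=
      ((hdiff x).hasDerivAt).add_const _
    have : (fun y => P (y + 2 * π)) = fun y => P y + 2 * π := funext hlift
    rw [this] at h1
    exact h1.unique h2
  set S := {x ∈ Set.Ico 0 (2 * π) | P x = x} with hS
  set s := hfin.toFinset with hsdef
  set l := s.sort (· ≤ ·) with hl
  have hmem : ∀ x, x ∈ l ↔ x ∈ S := by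
    intro x; rw [hl, Finset.mem_sort, hsdef, Set.Finite.mem_toFinset]
  have hsorted : l.SortedLT := Finset.sortedLT_sort s
  have hlne : l ≠ [] := by
    obtain ⟨x, hx⟩ := hne
    intro h
    have := (hmem x).mpr hx
    simp [h] at this
  set f : ℝ → Bool := fun x => decide (1 < deriv P x) with hf
  -- key step lemma for pairs of zeros
  have hkey : ∀ a b : ℝ, a < b → a ∈ S → g b = 0 → deriv P b ≠ 1 →
      (∀ y ∈ Ioo a b, g y ≠ 0) → (1 < deriv P b ↔ ¬ 1 < deriv P a) := by
    intro a b hab ha hgb hdb hno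
    have := pair_alt hgc hab ((hgzero a).mpr ha.2) hgb (hgd a) (hgd b)
      (sub_ne_zero.mpr (hhyp a ha)) (sub_ne_zero.mpr hdb) hno
    constructor
    · intro hb hcontra
      exact (this.mp (by linarith)) (by linarith)
    · intro hb
      by_contra hc
      have := this.mpr (by intro h; exact hb (by linarith))
      linarith
  -- no zero strictly between consecutive list entries
  have hnozero : ∀ (i : ℕ) (hi1 : i < l.length) (hi2 : i + 1 < l.length),
      ∀ y ∈ Ioo (l.get ⟨i, hi1⟩) (l.get ⟨i + 1, hi2⟩), g y ≠ 0 := by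
    intro i hi1 hi2 y hy hgy
    have hmemS : ∀ j : Fin l.length, l.get j ∈ S := fun j => (hmem _).mp (l.get_mem _)
    have hyS : y ∈ S := by
      refine ⟨⟨?_, ?_⟩, (hgzero y).mp hgy⟩
      · have := (hmemS ⟨i, hi1⟩).1.1; exact le_of_lt (lt_of_le_of_lt this hy.1)
      · exact lt_trans hy.2 (hmemS ⟨i + 1, hi2⟩).1.2
    obtain ⟨j, hj⟩ := List.get_of_mem ((hmem y).mpr hyS)
    have hsm := hsorted.strictMono_get
    rcases le_or_gt j ⟨i, hi1⟩ with h | h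
    · have : l.get j ≤ l.get ⟨i, hi1⟩ := hsm.monotone h
      rw [hj] at this; exact absurd hy.1 (not_lt.mpr this)
    · have : l.get ⟨i + 1, hi2⟩ ≤ l.get j := hsm.monotone (by exact h)
      rw [hj] at this; exact absurd hy.2 (not_lt.mpr this)
  -- the chain condition
  have hchain : l.Chain' (fun a b => f b = !f a) := by
    refine List.isChain_iff_getElem.mpr ?_
    intro i hi
    have hi1 : i < l.length := by omega
    have hi2 : i + 1 < l.length := by omega
    change f (l.get ⟨i + 1, hi2⟩) = !f (l.get ⟨i, hi1⟩)
    set a := l.get ⟨i, hi1⟩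
    set b := l.get ⟨i + 1, hi2⟩
    have haS : a ∈ S := (hmem _).mp (l.get_mem _)
    have hbS : b ∈ S := (hmem _).mp (l.get_mem _)
    have hab : a < b := hsorted.strictMono_get (by simp [Fin.lt_def])
    have hiff := hkey a b hab haS ((hgzero b).mpr hbS.2) (hhyp b hbS)
      (hnozero i hi1 hi2)
    simp only [hf]
    by_cases h1 : 1 < deriv P a <;> by_cases h2 : 1 < deriv P b <;>
      simp [h1, h2] at hiff ⊢ <;> tauto
  -- the wrap condition
  have hwrap : f (l.head hlne) = !f (l.getLast hlne) := by
    set a := l.getLast hlne with hadef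
    set b0 := l.head hlne with hb0def
    have haS : a ∈ S := (hmem _).mp (List.getLast_mem hlne)
    have hb0S : b0 ∈ S := (hmem _).mp (List.head_mem hlne)
    have hab : a < b0 + 2 * π := by
      have h1 : a < 2 * π := haS.1.2
      have h2 : 0 ≤ b0 := hb0S.1.1
      linarith
    have hgb : g (b0 + 2 * π) = 0 := by rw [hgper]; exact (hgzero b0).mpr hb0S.2
    have hdb : deriv P (b0 + 2 * π) ≠ 1 := by rw [hdper]; exact hhyp b0 hb0S
    have hno : ∀ y ∈ Ioo a (b0 + 2 * π), g y ≠ 0 := by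
      intro y hy hgy
      -- a is the max of l, b0 is the min
      have h0 : 0 < l.length := List.length_pos_iff.mpr hlne
      have hhead : l.head hlne = l.get ⟨0, h0⟩ :=
        (List.head_eq_getElem_zero hlne).trans (List.get_eq_getElem (l := l) (i := ⟨0, h0⟩)).symm
      have hmax : ∀ x ∈ l, x ≤ a := by
        intro x hx
        obtain ⟨j, hj⟩ := List.get_of_mem hx
        rw [← hj, hadef, List.getLast_eq_getElem]
        refine hsorted.strictMono_get.monotone (a := j) (b := ⟨l.length - 1, by omega⟩) ?_
        rw [Fin.le_def]
        have := j.isLt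
        simp
        omega
      have hmin : ∀ x ∈ l, b0 ≤ x := by
        intro x hx
        obtain ⟨j, hj⟩ := List.get_of_mem hx
        rw [← hj, hb0def, hhead]
        exact hsorted.strictMono_get.monotone (by rw [Fin.le_def]; simp)
      rcases lt_or_ge y (2 * π) with hy2 | hy2
      · have hyS : y ∈ S := by
          refine ⟨⟨?_, hy2⟩, (hgzero y).mp hgy⟩
          exact le_of_lt (lt_of_le_of_lt haS.1.1 hy.1)
        exact absurd hy.1 (not_lt.mpr (hmax y ((hmem y).mpr hyS)))
      · have hg2 : g (y - 2 * π) = 0 := by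
          have := hgper (y - 2 * π); simp at this; rw [← this]; exact hgy
        have hyS : y - 2 * π ∈ S := by
          refine ⟨⟨by linarith, ?_⟩, (hgzero _).mp hg2⟩
          have : y < b0 + 2 * π := hy.2
          have : b0 < 2 * π := hb0S.1.2
          linarith [hy.2]
        have := hmin _ ((hmem _).mpr hyS)
        linarith [hy.2]
    have hiff := hkey a (b0 + 2 * π) hab haS hgb hdb hno
    rw [hdper b0] at hiff
    simp only [hf]
    by_cases h1 : 1 < deriv P a <;> by_cases h2 : 1 < deriv P b0 <;>
      simp [h1, h2] at hiff ⊢ <;> tauto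
  -- counting
  have hcount := alt_count_eq f l hchain hlne hwrap
  -- translate ncard to countP
  have hA : {x ∈ Set.Ico 0 (2 * π) | P x = x ∧ deriv P x < 1} =
      ↑(s.filter (fun x => ¬ 1 < deriv P x)) := by
    ext x
    simp only [Finset.coe_filter, Set.mem_setOf_eq, hsdef, Set.Finite.mem_toFinset, hS,
      Set.mem_setOf_eq]
    constructor
    · rintro ⟨h1, h2, h3⟩; exact ⟨⟨h1, h2⟩, by linarith⟩
    · rintro ⟨⟨h1, h2⟩, h3⟩
      exact ⟨h1, h2, lt_of_le_of_ne (le_of_not_gt h3) (hhyp x ⟨h1, h2⟩)⟩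
  have hB : {x ∈ Set.Ico 0 (2 * π) | P x = x ∧ 1 < deriv P x} =
      ↑(s.filter (fun x => 1 < deriv P x)) := by
    ext x
    simp only [Finset.coe_filter, Set.mem_setOf_eq, hsdef, Set.Finite.mem_toFinset, hS,
      Set.mem_setOf_eq]
    tauto
  rw [hA, hB, Set.ncard_coe_finset, Set.ncard_coe_finset]
  -- card filter = countP over sorted list
  have hperm : (l : Multiset ℝ) = (s.toList : Multiset ℝ) :=
    Multiset.coe_eq_coe.mpr (Finset.sort_perm_toList s _)
  have hcard : ∀ p : ℝ → Prop, ∀ _ : DecidablePred p,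
      (s.filter p).card = l.countP (fun x => decide (p x)) := by
    intro p hp
    have h1 : (s.filter p).card = Multiset.countP p s.val := by
      rw [Multiset.countP_eq_card_filter]
      rfl
    have h2 : (s.toList : Multiset ℝ) = s.val := Multiset.coe_toList s.val
    rw [h1, ← h2, ← hperm, Multiset.coe_countP]
  rw [hcard _ _, hcard _ _]
  have hfeq : (fun x => decide (1 < deriv P x)) = f := rfl
  have hfeq2 : (fun x => decide (¬ 1 < deriv P x)) = fun a => !f a := by
    funext a; rw [hf]; exact decide_not
  rw [hfeq, hfeq2, ← hcount]
end
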